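/- arXiv:2111.08898 — 6 statements merged into one kernel-verified Lean document; each statement's English description precedes it below -/
import Mathlib

section
/- Let n ≥ 1 and let A = (a_{i,j}), B = (b_{i,j}) ∈ Ξ_{2n}. Then A ⪯ B holds if and only if both of the following hold: (i) for all u ∈ [1,n] and v ∈ [1,2n] with u < v, ∑_{i≤u, j≥v} a_{i,j} ≤ ∑_{i≤u, j≥v} b_{i,j}; and (ii) for all u, v ∈ [1,n] with u > v, ∑_{i≥u, j≤v} a_{i,j} ≤ ∑_{i≥u, j≤v} b_{i,j}. -/
open Finset

/-! The point reflection `(i, j) ↦ (2n+1-i, 2n+1-j)` of `Ξ_{2n}` maps the upper-right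
corner `[1,u] × [v,2n]` onto the lower-left corner `[2n+1-u, 2n] × [1, 2n+1-v]` and preserves
the entries, so the corner sums with `u > n` are the lower-left corner sums of condition (ii)
with row index `2n+1-u ≤ n`. -/

lemma sum_Icc_reflect {M : Type*} [AddCommMonoid M] (f : ℕ → M) {N a b : ℕ}
    (ha : a ≤ N) (hb : b ≤ N) :
    ∑ i ∈ Icc a b, f i = ∑ i ∈ Icc (N - b) (N - a), f (N - i) := by
  refine sum_nbij' (N - ·) (N - ·) ?_ ?_ ?_ ?_ ?_ <;> intro i hi <;>
    simp only [mem_Icc] at hi ⊢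
  all_goals first | omega | (congr 1; omega)

lemma upperRight_sum_eq_lowerLeft_sum {M : Type*} [AddCommMonoid M] (N : ℕ)
    (A : ℕ → ℕ → M)
    (hA : ∀ i j, 1 ≤ i → i ≤ N → 1 ≤ j → j ≤ N →
      A i j = A (N + 1 - i) (N + 1 - j))
    {u v : ℕ} (hu : 1 ≤ u) (huv : u < v) (hv : v ≤ N) :
    ∑ i ∈ Icc 1 u, ∑ j ∈ Icc v N, A i j
      = ∑ i ∈ Icc (N + 1 - u) N, ∑ j ∈ Icc 1 (N + 1 - v), A i j := by
  rw [sum_Icc_reflect _ (N := N + 1) (by omega) (by omega), Nat.add_sub_cancel]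
  refine sum_congr rfl fun i hi => ?_
  rw [sum_Icc_reflect _ (N := N + 1) (by omega) (by omega), Nat.add_sub_cancel_left]
  refine sum_congr rfl fun j hj => ?_
  simp only [mem_Icc] at hi hj
  rw [hA _ _ (by omega) (by omega) (by omega) (by omega)]
  congr 1 <;> omega

theorem prec_iff_two_conditions_general (n : ℕ) (A B : ℕ → ℕ → ℕ)
    (hA : ∀ i j, 1 ≤ i → i ≤ 2 * n → 1 ≤ j → j ≤ 2 * n →
      A i j = A (2 * n + 1 - i) (2 * n + 1 - j))
    (hB : ∀ i j, 1 ≤ i → i ≤ 2 * n → 1 ≤ j → j ≤ 2 * n →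
      B i j = B (2 * n + 1 - i) (2 * n + 1 - j)) :
    (∀ u v, 1 ≤ u → u < v → v ≤ 2 * n →
        (∑ i ∈ Icc 1 u, ∑ j ∈ Icc v (2 * n), A i j)
          ≤ ∑ i ∈ Icc 1 u, ∑ j ∈ Icc v (2 * n), B i j)
    ↔ ((∀ u v, 1 ≤ u → u ≤ n → 1 ≤ v → v ≤ 2 * n → u < v →
          (∑ i ∈ Icc 1 u, ∑ j ∈ Icc v (2 * n), A i j)
            ≤ ∑ i ∈ Icc 1 u, ∑ j ∈ Icc v (2 * n), B i j)
        ∧ (∀ u v, 1 ≤ v → v < u → u ≤ n →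
          (∑ i ∈ Icc u (2 * n), ∑ j ∈ Icc 1 v, A i j)
            ≤ ∑ i ∈ Icc u (2 * n), ∑ j ∈ Icc 1 v, B i j)) := by
  constructor
  · intro h
    refine ⟨fun u v hu _ _ hv huv => h u v hu huv hv, fun u v hv hvu hun => ?_⟩
    have hu' : 1 ≤ 2 * n + 1 - u := by omega
    have huv' : 2 * n + 1 - u < 2 * n + 1 - v := by omega
    have hv' : 2 * n + 1 - v ≤ 2 * n := by omega
    have := h _ _ hu' huv' hv'
    rwa [upperRight_sum_eq_lowerLeft_sum _ A hA hu' huv' hv',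
      upperRight_sum_eq_lowerLeft_sum _ B hB hu' huv' hv', Nat.sub_sub_self (by omega),
      Nat.sub_sub_self (by omega)] at this
  · rintro ⟨upper, lower⟩ u v hu huv hv
    by_cases hun : u ≤ n
    · exact upper u v hu hun (by omega) hv huv
    · rw [upperRight_sum_eq_lowerLeft_sum _ A hA hu huv hv,
        upperRight_sum_eq_lowerLeft_sum _ B hB hu huv hv]
      exact lower _ _ (by omega) (by omega) (by omega)

/-- For symmetric matrices `A, B ∈ Ξ_{2n}`, the preorder `A ⪯ B` (defined through
upper-right corner sums over all `1 ≤ u < v ≤ 2n`) is equivalent to the pair of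
conditions (i) on corner sums with `u ∈ [1,n]`, `v ∈ [1,2n]`, `u < v`, and
(ii) on lower-left corner sums with `u, v ∈ [1,n]`, `u > v`. -/
theorem prec_iff_two_conditions (n : ℕ) (hn : 1 ≤ n) (A B : ℕ → ℕ → ℕ)
    (hA : ∀ i j, 1 ≤ i → i ≤ 2 * n → 1 ≤ j → j ≤ 2 * n →
      A i j = A (2 * n + 1 - i) (2 * n + 1 - j))
    (hB : ∀ i j, 1 ≤ i → i ≤ 2 * n → 1 ≤ j → j ≤ 2 * n →
      B i j = B (2 * n + 1 - i) (2 * n + 1 - j)) :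
    (∀ u v, 1 ≤ u → u < v → v ≤ 2 * n →
        (∑ i ∈ Icc 1 u, ∑ j ∈ Icc v (2 * n), A i j)
          ≤ ∑ i ∈ Icc 1 u, ∑ j ∈ Icc v (2 * n), B i j)
    ↔ ((∀ u v, 1 ≤ u → u ≤ n → 1 ≤ v → v ≤ 2 * n → u < v →
          (∑ i ∈ Icc 1 u, ∑ j ∈ Icc v (2 * n), A i j)
            ≤ ∑ i ∈ Icc 1 u, ∑ j ∈ Icc v (2 * n), B i j)
        ∧ (∀ u v, 1 ≤ v → v < u → u ≤ n →
          (∑ i ∈ Icc u (2 * n), ∑ j ∈ Icc 1 v, A i j)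
            ≤ ∑ i ∈ Icc u (2 * n), ∑ j ∈ Icc 1 v, B i j)) :=
  prec_iff_two_conditions_general n A B hA hB
end

section
/- Let n ≥ 1 and let A, B ∈ Ξ_{2n}. Then A ⪯ B (preorder on 2n×2n matrices) if and only if A† ⪯ B† (preorder on (2n+1)×(2n+1) matrices). -/
/-!
Inside a corner `i ≤ u < v ≤ j` one never has `i = j = n + 1`, so the only nonzero entry of the
new row and column of `A†` never enters a corner sum. Hence every corner sum of `A†` is a corner
sum of `A`, read through the increasing enumeration of `ℕ ∖ {n + 1}`, and every corner sum of `A`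
arises this way.
-/

open Finset

/-- The entries of the matrix `A† ∈ Ξ_{2n+1}` obtained from `A ∈ Ξ_{2n}` by inserting
a new `(n+1)`-st row and column which are zero except for a `1` at position
`(n+1, n+1)`.  Indices are `1`-based. -/
def daggerEntry (n : ℕ) (A : ℕ → ℕ → ℕ) : ℕ → ℕ → ℕ := fun i j =>
  if i = n + 1 then (if j = n + 1 then 1 else 0)
  else if j = n + 1 then 0
  else A (if i ≤ n then i else i - 1) (if j ≤ n then j else j - 1)

/-- The index in `A†` of the row (or column) `j` of `A`. -/
def daggerIndex (n j : ℕ) : ℕ := if j ≤ n then j else j + 1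

def cornerSum (N : ℕ) (A : ℕ → ℕ → ℕ) (u v : ℕ) : ℕ :=
  ∑ i ∈ Icc 1 u, ∑ j ∈ Icc v N, A i j

/-- The preorder `⪯` on `N × N` matrices. -/
def MatrixPrec (N : ℕ) (A B : ℕ → ℕ → ℕ) : Prop :=
  ∀ u v, 1 ≤ u → u < v → v ≤ N → cornerSum N A u v ≤ cornerSum N B u v

section daggerIndex

variable {n : ℕ}

theorem daggerIndex_ne (n j : ℕ) : daggerIndex n j ≠ n + 1 := by
  unfold daggerIndex; split_ifs <;> omega

theorem daggerIndex_strictMono (n : ℕ) : StrictMono (daggerIndex n) := by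
  intro i j hij; unfold daggerIndex; split_ifs <;> omega

theorem mem_range_daggerIndex {k : ℕ} : k ∈ Set.range (daggerIndex n) ↔ k ≠ n + 1 := by
  refine ⟨fun ⟨j, hj⟩ => hj ▸ daggerIndex_ne n j, fun hk => ?_⟩
  refine ⟨if k ≤ n then k else k - 1, ?_⟩
  unfold daggerIndex; split_ifs <;> omega

theorem preimage_daggerIndex_Icc (a b : ℕ) :
    (Icc a b).preimage (daggerIndex n) (daggerIndex_strictMono n).injective.injOn =
      Icc (if a ≤ n + 1 then a else a - 1) (if b ≤ n then b else b - 1) := by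
  ext j
  simp only [mem_preimage, mem_Icc, daggerIndex]
  split_ifs <;> omega

theorem sum_Icc_eq_sum_Icc_daggerIndex {β : Type*} [AddCommMonoid β] (a b : ℕ) (f : ℕ → β)
    (hf : n + 1 ∈ Icc a b → f (n + 1) = 0) :
    ∑ j ∈ Icc a b, f j =
      ∑ j ∈ Icc (if a ≤ n + 1 then a else a - 1) (if b ≤ n then b else b - 1),
        f (daggerIndex n j) := by
  rw [← preimage_daggerIndex_Icc, sum_preimage]
  intro k hk hkr
  obtain rfl : k = n + 1 := not_ne_iff.mp (mt mem_range_daggerIndex.mpr hkr)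
  exact hf hk

end daggerIndex

section daggerEntry

variable {n : ℕ} (M : ℕ → ℕ → ℕ)

theorem daggerEntry_daggerIndex (i j : ℕ) :
    daggerEntry n M (daggerIndex n i) (daggerIndex n j) = M i j := by
  simp only [daggerEntry, if_neg (daggerIndex_ne n i), if_neg (daggerIndex_ne n j)]
  congr 1 <;> unfold daggerIndex <;> split_ifs <;> omega

theorem daggerEntry_mid_left {j : ℕ} (hj : j ≠ n + 1) : daggerEntry n M (n + 1) j = 0 := by
  simp [daggerEntry, hj]

theorem daggerEntry_mid_right {i : ℕ} (hi : i ≠ n + 1) : daggerEntry n M i (n + 1) = 0 := by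
  simp [daggerEntry, hi]

theorem cornerSum_daggerEntry {u v : ℕ} (huv : u < v) :
    cornerSum (2 * n + 1) (daggerEntry n M) u v =
      cornerSum (2 * n) M (if u ≤ n then u else u - 1) (if v ≤ n + 1 then v else v - 1) := by
  have hrow : n + 1 ∈ Icc 1 u → ∑ j ∈ Icc v (2 * n + 1), daggerEntry n M (n + 1) j = 0 := by
    intro hu
    refine sum_eq_zero fun j hj => daggerEntry_mid_left M ?_
    simp only [mem_Icc] at hu hj
    omega
  have hbound : (if 2 * n + 1 ≤ n then 2 * n + 1 else 2 * n + 1 - 1) = 2 * n := by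
    split_ifs <;> omega
  unfold cornerSum
  rw [sum_Icc_eq_sum_Icc_daggerIndex _ _ _ hrow, if_pos (by omega)]
  refine sum_congr (by split_ifs <;> rfl) fun i _ => ?_
  rw [sum_Icc_eq_sum_Icc_daggerIndex _ _ _ fun _ => daggerEntry_mid_right M (daggerIndex_ne n i),
    hbound]
  exact sum_congr rfl fun j _ => daggerEntry_daggerIndex M i j

theorem cornerSum_daggerEntry_daggerIndex {u v : ℕ} (huv : u < v) :
    cornerSum (2 * n + 1) (daggerEntry n M) (daggerIndex n u) (daggerIndex n v) =
      cornerSum (2 * n) M u v := by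
  rw [cornerSum_daggerEntry M (daggerIndex_strictMono n huv)]
  congr 1 <;> unfold daggerIndex <;> split_ifs <;> omega

end daggerEntry

theorem matrixPrec_daggerEntry_iff (n : ℕ) (A B : ℕ → ℕ → ℕ) :
    MatrixPrec (2 * n + 1) (daggerEntry n A) (daggerEntry n B) ↔ MatrixPrec (2 * n) A B := by
  constructor
  · intro h u v hu huv hv
    have key := h (daggerIndex n u) (daggerIndex n v) (by unfold daggerIndex; split_ifs <;> omega)
      (daggerIndex_strictMono n huv) (by unfold daggerIndex; split_ifs <;> omega)
    rwa [cornerSum_daggerEntry_daggerIndex A huv, cornerSum_daggerEntry_daggerIndex B huv] at key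
  · intro h u v hu huv hv
    rw [cornerSum_daggerEntry A huv, cornerSum_daggerEntry B huv]
    exact h _ _ (by split_ifs <;> omega) (by split_ifs <;> omega) (by split_ifs <;> omega)

theorem prec_iff_dagger_prec_general (n : ℕ) (A B : ℕ → ℕ → ℕ) :
    (∀ u v, 1 ≤ u → u < v → v ≤ 2 * n →
        (∑ i ∈ Icc 1 u, ∑ j ∈ Icc v (2 * n), A i j)
          ≤ ∑ i ∈ Icc 1 u, ∑ j ∈ Icc v (2 * n), B i j)
    ↔ (∀ u v, 1 ≤ u → u < v → v ≤ 2 * n + 1 →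
        (∑ i ∈ Icc 1 u, ∑ j ∈ Icc v (2 * n + 1), daggerEntry n A i j)
          ≤ ∑ i ∈ Icc 1 u, ∑ j ∈ Icc v (2 * n + 1), daggerEntry n B i j) :=
  (matrixPrec_daggerEntry_iff n A B).symm

/-- For `A, B ∈ Ξ_{2n}`, one has `A ⪯ B` (preorder on `2n × 2n` matrices) if and only
if `A† ⪯ B†` (preorder on `(2n+1) × (2n+1)` matrices). -/
theorem prec_iff_dagger_prec (n : ℕ) (hn : 1 ≤ n) (A B : ℕ → ℕ → ℕ)
    (hA : ∀ i j, 1 ≤ i → i ≤ 2 * n → 1 ≤ j → j ≤ 2 * n →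
      A i j = A (2 * n + 1 - i) (2 * n + 1 - j))
    (hB : ∀ i j, 1 ≤ i → i ≤ 2 * n → 1 ≤ j → j ≤ 2 * n →
      B i j = B (2 * n + 1 - i) (2 * n + 1 - j)) :
    (∀ u v, 1 ≤ u → u < v → v ≤ 2 * n →
        (∑ i ∈ Icc 1 u, ∑ j ∈ Icc v (2 * n), A i j)
          ≤ ∑ i ∈ Icc 1 u, ∑ j ∈ Icc v (2 * n), B i j)
    ↔ (∀ u v, 1 ≤ u → u < v → v ≤ 2 * n + 1 →
        (∑ i ∈ Icc 1 u, ∑ j ∈ Icc v (2 * n + 1), daggerEntry n A i j)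
          ≤ ∑ i ∈ Icc 1 u, ∑ j ∈ Icc v (2 * n + 1), daggerEntry n B i j) :=
  prec_iff_dagger_prec_general n A B
end

section
/- Let n, r ≥ 1 and λ, μ ∈ Λ(n,r). Let W be the centralizer in the symmetric group on {1,…,2r} of the involution θ_0 : i ↦ 2r+1−i. For ν ∈ Λ(n,r) and i ∈ [1,2n], let R^ν_i = {ν̂_1+⋯+ν̂_{i−1}+1, …, ν̂_1+⋯+ν̂_i} be the i-th block determined by ν̂, and let W_ν = {w ∈ W : w(R^ν_i) = R^ν_i for all i ∈ [1,2n]}, a subgroup of W. For w ∈ W define the 2n×2n matrix A(w) by A(w)_{i,j} = #{l ∈ R^μ_j : w(l) ∈ R^λ_i}. Then: (a) A(w) ∈ Ξ_{2n,2r} with ro(A(w)) = λ̂ and co(A(w)) = μ̂; (b) A(w) depends only on the double coset W_λ w W_μ; and (c) the induced map from the set of double cosets W_λ\W/W_μ to {A ∈ Ξ_{2n,2r} : ro(A) = λ̂, co(A) = μ̂} is a bijection. -/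
open Finset

/-- The palindromically doubled vector `ν̂ = (ν_1, …, ν_n, ν_n, …, ν_1)`,
in `0`-based indexing. -/
def hatVec {n : ℕ} (l : Fin n → ℕ) : Fin (2 * n) → ℕ := fun i =>
  if h : (i : ℕ) < n then l ⟨i, h⟩
  else l ⟨2 * n - 1 - (i : ℕ), by have := i.isLt; omega⟩

/-- The partial sum `ν̂_1 + ⋯ + ν̂_{i-1}` of the doubled vector. -/
def psum {n : ℕ} (ν : Fin n → ℕ) (i : Fin (2 * n)) : ℕ :=
  ∑ j ∈ Finset.Iio i, hatVec ν j

/-- `l` lies in the `i`-th block `R^ν_i = {ν̂_1+⋯+ν̂_{i-1}+1, …, ν̂_1+⋯+ν̂_i}`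
(here in `0`-based indexing of `{1, …, 2r}`). -/
def inBlock {n r : ℕ} (ν : Fin n → ℕ) (i : Fin (2 * n)) (l : Fin (2 * r)) : Prop :=
  psum ν i ≤ (l : ℕ) ∧ (l : ℕ) < psum ν i + hatVec ν i

instance {n r : ℕ} (ν : Fin n → ℕ) (i : Fin (2 * n)) (l : Fin (2 * r)) :
    Decidable (inBlock ν i l) :=
  inferInstanceAs (Decidable (_ ∧ _))

/-- The matrix `A(w)` with `A(w)_{i,j} = #{l ∈ R^μ_j : w(l) ∈ R^λ_i}`. -/
def dcMatrix {n r : ℕ} (lam mu : Fin n → ℕ) (w : Equiv.Perm (Fin (2 * r))) :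
    Fin (2 * n) → Fin (2 * n) → ℕ := fun i j =>
  (Finset.univ.filter (fun l : Fin (2 * r) => inBlock mu j l ∧ inBlock lam i (w l))).card

/-- `w` lies in `W`, the centralizer in the symmetric group of `θ_0 : i ↦ 2r+1-i`. -/
def inW {r : ℕ} (w : Equiv.Perm (Fin (2 * r))) : Prop :=
  ∀ l : Fin (2 * r), w l.rev = (w l).rev

/-- `w` lies in the parabolic subgroup `W_ν` of `W` stabilizing every block `R^ν_i`. -/
def inWpar {n r : ℕ} (ν : Fin n → ℕ) (w : Equiv.Perm (Fin (2 * r))) : Prop :=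
  inW w ∧ ∀ (i : Fin (2 * n)) (l : Fin (2 * r)), inBlock ν i l → inBlock ν i (w l)

/-!
Because `∑ ν = r`, the blocks `R^ν_i` partition `Fin (2r)`, and since `ν̂` is a palindrome the
block map commutes with the reversals of `Fin (2r)` and `Fin (2n)`. The entry `A(w)_{ij}` counts
the fiber over `(i, j)` of the cell map `l ↦ (block of w l, block of l)`, which gives (a) and (b).

For (c) everything rests on a matching lemma: two `rev`-equivariant maps `f g : Fin N → T` with
fibers of equal sizes satisfy `g ∘ w = f` for some `w` commuting with `rev`. Take for `w` the
unique matching that is increasing on every fiber; conjugating it by the order-reversing `rev`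
gives another such matching, hence the same one. Injectivity matches the cell maps of `w` and
`w'`. For surjectivity, cutting `Fin (2r)` into blocks according to `B` (flattened by
`finProdFinEquiv`) gives an equivariant map with fiber sizes `B`, and two matchings align its
columns with the blocks of `μ̂` and then its rows with the blocks of `λ̂`.
-/

section FiberwiseMatching

variable {α T : Type*} [LinearOrder α] {f g : α → T}

theorem exists_perm_strictMono_fibers [Fintype α] [DecidableEq T]
    (hc : ∀ t, #{l | f l = t} = #{l | g l = t}) :
    ∃ w : Equiv.Perm α, (∀ l, g (w l) = f l) ∧
      ∀ t, StrictMono fun x : {x // f x = t} => w x := by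
  let e t : {x // f x = t} ≃o {x // g x = t} :=
    (Fintype.orderIsoFinOfCardEq _ (Fintype.card_subtype _)).symm.trans
      (Fintype.orderIsoFinOfCardEq _ ((Fintype.card_subtype _).trans (hc t).symm))
  have happly t (x : {x // f x = t}) :
      Equiv.ofFiberEquiv (fun t => (e t).toEquiv) x = e t x := by
    obtain ⟨x, rfl⟩ := x
    rfl
  refine ⟨Equiv.ofFiberEquiv fun t => (e t).toEquiv, Equiv.ofFiberEquiv_map _,
    fun t x y hxy => ?_⟩
  simpa only [happly] using Subtype.coe_lt_coe.mpr ((e t).strictMono hxy)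

theorem perm_eq_of_strictMono_fibers [WellFoundedLT α] {w₁ w₂ : Equiv.Perm α}
    (h₁ : ∀ l, g (w₁ l) = f l) (h₂ : ∀ l, g (w₂ l) = f l)
    (m₁ : ∀ t, StrictMono fun x : {x // f x = t} => w₁ x)
    (m₂ : ∀ t, StrictMono fun x : {x // f x = t} => w₂ x) : w₁ = w₂ := by
  have range_eq {w : Equiv.Perm α} (hw : ∀ l, g (w l) = f l) (t : T) :
      Set.range (fun x : {x // f x = t} => w x) = {y | g y = t} := by
    ext y
    refine ⟨?_, fun hy =>
      ⟨⟨w.symm y, by rw [← hw, w.apply_symm_apply, hy]⟩, w.apply_symm_apply y⟩⟩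
    rintro ⟨x, rfl⟩
    exact (hw x).trans x.2
  ext l
  have := ((m₁ (f l)).range_inj (m₂ (f l))).mp (by rw [range_eq h₁, range_eq h₂])
  exact congrFun this ⟨l, rfl⟩

end FiberwiseMatching

theorem exists_rev_equivariant_perm_comp_eq {N : ℕ} {T : Type*} [DecidableEq T] (τ : T → T)
    {f g : Fin N → T} (hf : ∀ l, f l.rev = τ (f l)) (hg : ∀ l, g l.rev = τ (g l))
    (hc : ∀ t, #{l | f l = t} = #{l | g l = t}) :
    ∃ w : Equiv.Perm (Fin N), (∀ l, w l.rev = (w l).rev) ∧ ∀ l, g (w l) = f l := by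
  obtain ⟨w, hw, hmono⟩ := exists_perm_strictMono_fibers hc
  have hτ l : τ (τ (f l)) = f l := by rw [← hf, ← hf, Fin.rev_rev]
  have hconj : Fin.revPerm * w * Fin.revPerm = w := by
    refine perm_eq_of_strictMono_fibers (fun l => ?_) hw (fun t x y hxy => ?_) hmono
    · simp [hg, hw, hf, hτ]
    · have hx : f x.1.rev = τ t := by rw [hf, x.2]
      have hy : f y.1.rev = τ t := by rw [hf, y.2]
      simpa using hmono (τ t) (a := ⟨y.1.rev, hy⟩) (b := ⟨x.1.rev, hx⟩)
        (Fin.rev_lt_rev.mpr hxy)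
  refine ⟨w, fun l => ?_, hw⟩
  simpa using (congrArg (· l.rev) hconj).symm

section Blocks

variable {m : ℕ} (v : Fin m → ℕ)

def blockStart (i : Fin m) : ℕ := ∑ j ∈ Iio i, v j

def block (i : Fin m) : Finset ℕ := Ico (blockStart v i) (blockStart v i + v i)

variable {v}

theorem blockStart_add_le_of_lt {i j : Fin m} (h : i < j) :
    blockStart v i + v i ≤ blockStart v j := by
  rw [blockStart, add_comm, ← sum_insert notMem_Iio_self]
  exact sum_le_sum_of_subset fun x hx => by
    simp only [mem_insert, mem_Iio] at hx ⊢
    rcases hx with rfl | hx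
    exacts [h, hx.trans h]

theorem blockStart_add_add_sum_Ioi (i : Fin m) :
    blockStart v i + v i + ∑ j ∈ Ioi i, v j = ∑ j, v j := by
  rw [← sum_filter_add_sum_filter_not univ (· < i), filter_gt_eq_Iio, add_assoc,
    ← sum_cons notMem_Ioi_self, ← Ici_eq_cons_Ioi, blockStart]
  congr 2
  ext j; simp

theorem blockStart_add_le_sum (i : Fin m) : blockStart v i + v i ≤ ∑ j, v j :=
  (blockStart_add_add_sum_Ioi i) ▸ Nat.le_add_right _ _

theorem blockStart_rev_add (hpal : ∀ i, v i.rev = v i) (i : Fin m) :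
    blockStart v i.rev + (blockStart v i + v i) = ∑ j, v j := by
  have : blockStart v i.rev = ∑ j ∈ Ioi i, v j := by
    rw [blockStart, ← Fin.map_revPerm_Ioi, sum_map]
    simp [hpal]
  rw [this, add_comm, blockStart_add_add_sum_Ioi]

theorem card_block (i : Fin m) : #(block v i) = v i := by simp [block]

open Function in
theorem pairwise_disjoint_block : Pairwise (Disjoint on block v) := by
  refine pairwise_disjoint_on _ |>.mpr fun i j h => disjoint_left.mpr fun k hi hj => ?_
  have := blockStart_add_le_of_lt (v := v) h
  simp only [block, mem_Ico] at hi hj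
  omega

theorem biUnion_block : univ.biUnion (block v) = range (∑ j, v j) := by
  refine eq_of_subset_of_card_le (fun k hk => ?_) ?_
  · obtain ⟨i, -, hk⟩ := mem_biUnion.mp hk
    simp only [block, mem_Ico] at hk
    exact mem_range.mpr (hk.2.trans_le (blockStart_add_le_sum i))
  · rw [card_biUnion (pairwise_disjoint_block.set_pairwise _), card_range]
    simp [card_block]

end Blocks

section BlockIndex

variable {m N : ℕ} {v : Fin m → ℕ}

theorem existsUnique_mem_block {k : ℕ} (hk : k < ∑ j, v j) : ∃! i, k ∈ block v i := by
  obtain ⟨i, -, hi⟩ := mem_biUnion.mp (biUnion_block (v := v) ▸ mem_range.mpr hk)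
  exact ⟨i, hi, fun j hj =>
    by_contra fun h => disjoint_left.mp (pairwise_disjoint_block h) hj hi⟩

variable (v) in
noncomputable def blockIdx (hv : ∑ j, v j = N) (k : Fin N) : Fin m :=
  (existsUnique_mem_block (k.isLt.trans_eq hv.symm)).exists.choose

variable (hv : ∑ j, v j = N)

theorem blockIdx_eq_iff {k : Fin N} {i : Fin m} :
    blockIdx v hv k = i ↔ (k : ℕ) ∈ block v i := by
  have h := existsUnique_mem_block (k.isLt.trans_eq hv.symm)
  exact ⟨fun hi => hi ▸ h.exists.choose_spec, fun hi => h.unique h.exists.choose_spec hi⟩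

theorem card_blockIdx_eq (i : Fin m) : #{k | blockIdx v hv k = i} = v i := by
  have hsub : block v i ⊆ range N :=
    hv ▸ biUnion_block (v := v) ▸ subset_biUnion_of_mem _ (mem_univ i)
  rw [← card_block (v := v) i, ← card_map Fin.valEmbedding]
  congr 1
  ext k
  simp only [mem_map, mem_filter, mem_univ, true_and, blockIdx_eq_iff,
    Fin.valEmbedding_apply]
  exact ⟨fun ⟨k, hk, h⟩ => h ▸ hk,
    fun hk => ⟨⟨k, mem_range.mp (hsub hk)⟩, hk, rfl⟩⟩

theorem blockIdx_rev (hpal : ∀ i, v i.rev = v i) (k : Fin N) :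
    blockIdx v hv k.rev = (blockIdx v hv k).rev := by
  set i := blockIdx v hv k
  have hk : (k : ℕ) ∈ block v i := (blockIdx_eq_iff hv).mp rfl
  have hrev := blockStart_rev_add hpal i
  rw [blockIdx_eq_iff]
  simp only [block, mem_Ico, Fin.val_rev, hpal] at hk ⊢
  omega

end BlockIndex

theorem finProdFinEquiv_map_rev {a b : ℕ} (p : Fin a × Fin b) :
    finProdFinEquiv (Prod.map Fin.rev Fin.rev p) = (finProdFinEquiv p).rev := by
  obtain ⟨⟨i, hi⟩, ⟨j, hj⟩⟩ := p
  obtain ⟨a, rfl⟩ := Nat.exists_eq_add_of_lt hi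
  obtain ⟨b, rfl⟩ := Nat.exists_eq_add_of_lt hj
  ext
  simp only [finProdFinEquiv_apply_val, Prod.map_fst, Prod.map_snd, Fin.val_rev]
  rw [show j + b + 1 - (j + 1) = b by omega, show i + a + 1 - (i + 1) = a by omega]
  exact (Nat.sub_eq_of_eq_add (by ring)).symm

theorem card_filter_comp_equiv {α β : Type*} [Fintype α] [Fintype β] (e : α ≃ β)
    (p : β → Prop) [DecidablePred p] : #{a | p (e a)} = #{b | p b} :=
  card_equiv e (by simp)

theorem sum_card_fiber_prod_eq_left {α β γ : Type*} [Fintype α] [Fintype γ] [DecidableEq β]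
    [DecidableEq γ] (F : α → β × γ) (b : β) :
    ∑ c, #{a | F a = (b, c)} = #{a | (F a).1 = b} := by
  rw [card_eq_sum_card_fiberwise (f := fun a => (F a).2) (t := univ)
    fun _ _ => mem_coe.mpr (mem_univ _)]
  simp only [filter_filter, Prod.ext_iff]

theorem sum_card_fiber_prod_eq_right {α β γ : Type*} [Fintype α] [Fintype β] [DecidableEq β]
    [DecidableEq γ] (F : α → β × γ) (c : γ) :
    ∑ b, #{a | F a = (b, c)} = #{a | (F a).2 = c} := by
  rw [card_eq_sum_card_fiberwise (f := fun a => (F a).1) (t := univ)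
    fun _ _ => mem_coe.mpr (mem_univ _)]
  simp only [filter_filter, Prod.ext_iff, and_comm]

theorem exists_rev_equivariant_card_fiber_eq {a b N : ℕ} (B : Fin a → Fin b → ℕ)
    (hsym : ∀ i j, B i.rev j.rev = B i j) (hB : ∑ i, ∑ j, B i j = N) :
    ∃ G : Fin N → Fin a × Fin b, (∀ l, G l.rev = Prod.map Fin.rev Fin.rev (G l)) ∧
      ∀ i j, #{l | G l = (i, j)} = B i j := by
  set v : Fin (a * b) → ℕ := fun k => Function.uncurry B (finProdFinEquiv.symm k)
  have hv : ∑ k, v k = N := by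
    rw [← hB, ← Fintype.sum_prod_type', ← finProdFinEquiv.sum_comp]
    simp only [v, Equiv.symm_apply_apply, Function.uncurry_def]
  have hpal k : v k.rev = v k := by
    obtain ⟨p, rfl⟩ := finProdFinEquiv.surjective k
    simp only [v, ← finProdFinEquiv_map_rev, Equiv.symm_apply_apply, Function.uncurry_def,
      Prod.map_fst, Prod.map_snd, hsym]
  refine ⟨fun l => finProdFinEquiv.symm (blockIdx v hv l), fun l => ?_, fun i j => ?_⟩
  · dsimp only
    rw [blockIdx_rev hv hpal, finProdFinEquiv.symm_apply_eq, finProdFinEquiv_map_rev,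
      Equiv.apply_symm_apply]
  · simp_rw [finProdFinEquiv.symm_apply_eq, card_blockIdx_eq]
    simp only [v, Equiv.symm_apply_apply, Function.uncurry_apply_pair]

theorem hatVec_rev {n : ℕ} (ν : Fin n → ℕ) (i : Fin (2 * n)) :
    hatVec ν i.rev = hatVec ν i := by
  have := i.isLt
  simp only [hatVec, Fin.val_rev]
  split_ifs <;> first | omega | (congr 1; ext; simp only; omega)

theorem sum_hatVec {n r : ℕ} {ν : Fin n → ℕ} (hν : ∑ i, ν i = r) :
    ∑ i, hatVec ν i = 2 * r := by
  subst hν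
  rw [← Fin.sum_congr' _ (two_mul n).symm, Fin.sum_univ_add, two_mul (∑ i, ν i)]
  congr 1
  · simp [hatVec]
  · rw [← Equiv.sum_comp Fin.revPerm ν]
    refine sum_congr rfl fun i _ => ?_
    simp only [hatVec, Fin.revPerm_apply, Fin.val_cast, Fin.val_natAdd]
    rw [dif_neg (by omega)]
    congr 1; ext; simp only [Fin.val_rev]; omega

theorem inW_iff_commute {r : ℕ} {w : Equiv.Perm (Fin (2 * r))} :
    inW w ↔ Commute w Fin.revPerm := by
  simp [inW, Commute, SemiconjBy, Equiv.ext_iff]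

section DoubleCosets

variable {n r : ℕ} {ν lam mu : Fin n → ℕ}

noncomputable def blockOf (hν : ∑ i, ν i = r) : Fin (2 * r) → Fin (2 * n) :=
  blockIdx (hatVec ν) (sum_hatVec hν)

variable (hν : ∑ i, ν i = r)

theorem inBlock_iff_blockOf_eq {i : Fin (2 * n)} {l : Fin (2 * r)} :
    inBlock ν i l ↔ blockOf hν l = i := by
  rw [blockOf, blockIdx_eq_iff, block, mem_Ico]
  rfl

theorem blockOf_rev (l : Fin (2 * r)) : blockOf hν l.rev = (blockOf hν l).rev :=
  blockIdx_rev _ (hatVec_rev ν) l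

theorem card_blockOf_eq (i : Fin (2 * n)) : #{l | blockOf hν l = i} = hatVec ν i :=
  card_blockIdx_eq _ i

theorem inWpar_iff {x : Equiv.Perm (Fin (2 * r))} :
    inWpar ν x ↔ inW x ∧ ∀ l, blockOf hν (x l) = blockOf hν l := by
  simp only [inWpar, inBlock_iff_blockOf_eq hν]
  exact and_congr_right fun _ => ⟨fun h l => h _ l rfl, fun h i l hl => (h l).trans hl⟩

noncomputable def cellOf (hlam : ∑ i, lam i = r) (hmu : ∑ i, mu i = r)
    (w : Equiv.Perm (Fin (2 * r))) (l : Fin (2 * r)) : Fin (2 * n) × Fin (2 * n) :=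
  (blockOf hlam (w l), blockOf hmu l)

theorem dcMatrix_eq_card (hlam : ∑ i, lam i = r) (hmu : ∑ i, mu i = r)
    (w : Equiv.Perm (Fin (2 * r))) (i j : Fin (2 * n)) :
    dcMatrix lam mu w i j = #{l | cellOf hlam hmu w l = (i, j)} := by
  simp only [dcMatrix, cellOf, inBlock_iff_blockOf_eq hlam, inBlock_iff_blockOf_eq hmu,
    Prod.mk.injEq, and_comm]

theorem cellOf_rev (hlam : ∑ i, lam i = r) (hmu : ∑ i, mu i = r)
    {w : Equiv.Perm (Fin (2 * r))} (hw : inW w) (l : Fin (2 * r)) :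
    cellOf hlam hmu w l.rev = Prod.map Fin.rev Fin.rev (cellOf hlam hmu w l) := by
  simp [cellOf, hw l, blockOf_rev]

theorem dcMatrix_rev (hlam : ∑ i, lam i = r) (hmu : ∑ i, mu i = r)
    {w : Equiv.Perm (Fin (2 * r))} (hw : inW w) (i j : Fin (2 * n)) :
    dcMatrix lam mu w i j = dcMatrix lam mu w i.rev j.rev := by
  simp only [dcMatrix_eq_card hlam hmu]
  exact card_equiv Fin.revPerm fun l => by simp [cellOf_rev hlam hmu hw, Prod.ext_iff]

theorem sum_dcMatrix_row (hlam : ∑ i, lam i = r) (hmu : ∑ i, mu i = r)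
    (w : Equiv.Perm (Fin (2 * r))) (i : Fin (2 * n)) :
    ∑ j, dcMatrix lam mu w i j = hatVec lam i := by
  simp only [dcMatrix_eq_card hlam hmu]
  rw [sum_card_fiber_prod_eq_left]
  exact (card_filter_comp_equiv w fun l => blockOf hlam l = i).trans (card_blockOf_eq hlam i)

theorem sum_dcMatrix_col (hlam : ∑ i, lam i = r) (hmu : ∑ i, mu i = r)
    (w : Equiv.Perm (Fin (2 * r))) (j : Fin (2 * n)) :
    ∑ i, dcMatrix lam mu w i j = hatVec mu j := by
  simp only [dcMatrix_eq_card hlam hmu]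
  rw [sum_card_fiber_prod_eq_right]
  exact card_blockOf_eq hmu j

theorem dcMatrix_mul_mul (hlam : ∑ i, lam i = r) (hmu : ∑ i, mu i = r)
    {w x y : Equiv.Perm (Fin (2 * r))} (hx : inWpar lam x) (hy : inWpar mu y) :
    dcMatrix lam mu (x * w * y) = dcMatrix lam mu w := by
  have hcell : cellOf hlam hmu (x * w * y) = cellOf hlam hmu w ∘ y := by
    funext l
    simp [cellOf, ((inWpar_iff hlam).mp hx).2, ((inWpar_iff hmu).mp hy).2]
  funext i j
  rw [dcMatrix_eq_card hlam hmu, dcMatrix_eq_card hlam hmu, hcell]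
  exact card_filter_comp_equiv y fun l => cellOf hlam hmu w l = (i, j)

theorem exists_mul_mul_eq_of_dcMatrix_eq (hlam : ∑ i, lam i = r) (hmu : ∑ i, mu i = r)
    {w w' : Equiv.Perm (Fin (2 * r))} (hw : inW w) (hw' : inW w')
    (h : dcMatrix lam mu w = dcMatrix lam mu w') :
    ∃ x y : Equiv.Perm (Fin (2 * r)), inWpar lam x ∧ inWpar mu y ∧ w' = x * w * y := by
  obtain ⟨y, hy, hcell⟩ := exists_rev_equivariant_perm_comp_eq (Prod.map Fin.rev Fin.rev)
    (cellOf_rev hlam hmu hw') (cellOf_rev hlam hmu hw) fun ⟨i, j⟩ => by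
      rw [← dcMatrix_eq_card hlam hmu, ← dcMatrix_eq_card hlam hmu, h]
  simp only [cellOf, Prod.mk.injEq] at hcell
  refine ⟨w' * y⁻¹ * w⁻¹, y, (inWpar_iff hlam).mpr ⟨?_, fun l => ?_⟩,
    (inWpar_iff hmu).mpr ⟨hy, fun l => (hcell l).2⟩, by group⟩
  · rw [inW_iff_commute] at hw hw' ⊢
    exact (hw'.mul_left (inW_iff_commute.mp hy).inv_left).mul_left hw.inv_left
  · simpa using (hcell (y⁻¹ (w⁻¹ l))).1.symm

theorem exists_dcMatrix_eq (hlam : ∑ i, lam i = r) (hmu : ∑ i, mu i = r)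
    (B : Fin (2 * n) → Fin (2 * n) → ℕ)
    (hsym : ∀ i j, B i j = B i.rev j.rev) (hrow : ∀ i, ∑ j, B i j = hatVec lam i)
    (hcol : ∀ j, ∑ i, B i j = hatVec mu j) :
    ∃ w : Equiv.Perm (Fin (2 * r)), inW w ∧ dcMatrix lam mu w = B := by
  obtain ⟨G, hGrev, hG⟩ := exists_rev_equivariant_card_fiber_eq (N := 2 * r) B
    (fun i j => (hsym i j).symm) (by simp_rw [hrow, sum_hatVec hlam])
  obtain ⟨y, hy, hyG⟩ := exists_rev_equivariant_perm_comp_eq Fin.rev (g := fun l => (G l).2)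
    (blockOf_rev hmu) (fun l => by simp [hGrev]) fun j => by
      rw [card_blockOf_eq, ← sum_card_fiber_prod_eq_right, ← hcol]
      simp_rw [hG]
  obtain ⟨w, hw, hwG⟩ := exists_rev_equivariant_perm_comp_eq Fin.rev (f := fun l => (G (y l)).1)
    (fun l => by simp [hy l, hGrev]) (blockOf_rev hlam) fun i => by
      rw [card_blockOf_eq, card_filter_comp_equiv y fun l => (G l).1 = i,
        ← sum_card_fiber_prod_eq_left, ← hrow]
      simp_rw [hG]
  refine ⟨w, hw, funext₂ fun i j => ?_⟩
  have hcell : cellOf hlam hmu w = G ∘ y := funext fun l => Prod.ext (hwG l) (hyG l).symm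
  rw [dcMatrix_eq_card hlam hmu, hcell, ← hG]
  exact card_filter_comp_equiv y fun l => G l = (i, j)

end DoubleCosets

theorem doubleCoset_matrix_bijection_general (n r : ℕ)
    (lam mu : Fin n → ℕ) (hlam : ∑ i, lam i = r) (hmu : ∑ i, mu i = r) :
    -- (a)
    ((∀ w : Equiv.Perm (Fin (2 * r)), inW w →
      (∀ i j, dcMatrix lam mu w i j = dcMatrix lam mu w i.rev j.rev) ∧
      (∑ i, ∑ j, dcMatrix lam mu w i j) = 2 * r ∧
      (∀ i, (∑ j, dcMatrix lam mu w i j) = hatVec lam i) ∧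
      (∀ j, (∑ i, dcMatrix lam mu w i j) = hatVec mu j))
    -- (b)
    ∧ (∀ w x y : Equiv.Perm (Fin (2 * r)), inW w → inWpar lam x → inWpar mu y →
        dcMatrix lam mu (x * w * y) = dcMatrix lam mu w)
    -- (c): surjectivity
    ∧ (∀ B : Fin (2 * n) → Fin (2 * n) → ℕ,
        (∀ i j, B i j = B i.rev j.rev) →
        (∀ i, (∑ j, B i j) = hatVec lam i) →
        (∀ j, (∑ i, B i j) = hatVec mu j) →
        ∃ w : Equiv.Perm (Fin (2 * r)), inW w ∧ dcMatrix lam mu w = B)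
    -- (c): injectivity modulo double cosets
    ∧ (∀ w w' : Equiv.Perm (Fin (2 * r)), inW w → inW w' →
        dcMatrix lam mu w = dcMatrix lam mu w' →
        ∃ x y : Equiv.Perm (Fin (2 * r)),
          inWpar lam x ∧ inWpar mu y ∧ w' = x * w * y)) := by
  refine ⟨fun w hw => ⟨dcMatrix_rev hlam hmu hw, ?_, sum_dcMatrix_row hlam hmu w,
      sum_dcMatrix_col hlam hmu w⟩,
    fun w x y _ hx hy => dcMatrix_mul_mul hlam hmu hx hy,
    fun B hsym hrow hcol => exists_dcMatrix_eq hlam hmu B hsym hrow hcol,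
    fun w w' hw hw' h => exists_mul_mul_eq_of_dcMatrix_eq hlam hmu hw hw' h⟩
  simp_rw [sum_dcMatrix_row hlam hmu w, sum_hatVec hlam]

/-- For `λ, μ ∈ Λ(n,r)`: (a) for `w ∈ W` the matrix `A(w)` lies in `Ξ_{2n,2r}` with
`ro(A(w)) = λ̂` and `co(A(w)) = μ̂`; (b) `A(w)` depends only on the double coset
`W_λ w W_μ`; and (c) the induced map from double cosets `W_λ\W/W_μ` to
`{A ∈ Ξ_{2n,2r} : ro(A) = λ̂, co(A) = μ̂}` is a bijection. -/
theorem doubleCoset_matrix_bijection (n r : ℕ) (hn : 1 ≤ n) (hr : 1 ≤ r)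
    (lam mu : Fin n → ℕ) (hlam : ∑ i, lam i = r) (hmu : ∑ i, mu i = r) :
    -- (a)
    ((∀ w : Equiv.Perm (Fin (2 * r)), inW w →
      (∀ i j, dcMatrix lam mu w i j = dcMatrix lam mu w i.rev j.rev) ∧
      (∑ i, ∑ j, dcMatrix lam mu w i j) = 2 * r ∧
      (∀ i, (∑ j, dcMatrix lam mu w i j) = hatVec lam i) ∧
      (∀ j, (∑ i, dcMatrix lam mu w i j) = hatVec mu j))
    -- (b)
    ∧ (∀ w x y : Equiv.Perm (Fin (2 * r)), inW w → inWpar lam x → inWpar mu y →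
        dcMatrix lam mu (x * w * y) = dcMatrix lam mu w)
    -- (c): surjectivity
    ∧ (∀ B : Fin (2 * n) → Fin (2 * n) → ℕ,
        (∀ i j, B i j = B i.rev j.rev) →
        (∀ i, (∑ j, B i j) = hatVec lam i) →
        (∀ j, (∑ i, B i j) = hatVec mu j) →
        ∃ w : Equiv.Perm (Fin (2 * r)), inW w ∧ dcMatrix lam mu w = B)
    -- (c): injectivity modulo double cosets
    ∧ (∀ w w' : Equiv.Perm (Fin (2 * r)), inW w → inW w' →
        dcMatrix lam mu w = dcMatrix lam mu w' →
        ∃ x y : Equiv.Perm (Fin (2 * r)),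
          inWpar lam x ∧ inWpar mu y ∧ w' = x * w * y)) :=
  doubleCoset_matrix_bijection_general n r lam mu hlam hmu
end

section
/- Let n ≥ r ≥ 1, let i = (i_1,…,i_r) ∈ I(2n,r), and let l ∈ [1,r] with i_l = n. Then β'_l(A_i, n) = #{k ∈ [1, l−1] : i_k = n+1} − #{k ∈ [1, l−1] : i_k = n}, as integers. -/
open Finset

/-! In the first `r` columns `A_i` is the incidence matrix of `i`, so for `p ≤ r` the partial
row sums `∑_{j ≤ p} a_{h,j}` count the `k ≤ p` with `i_k = h`. Since `i_l = n ≠ n + 1`, the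
`l`-th column adds nothing to row `n + 1`, and both sums run over `[1, l - 1]`. -/

/-- The matrix `A_i` associated with a tuple `i = (i_1, …, i_r) ∈ I(2n,r)` (here
`1`-based indexing): `a_{k,l} = δ_{k, i_l}` for `l ∈ [1,r]`, `a_{k,l} = 0` for
`l ∈ [r+1, 2n-r]`, and `a_{k,l} = δ_{2n+1-k, i_{2n+1-l}}` for `l ∈ [2n+1-r, 2n]`. -/
def tupleMat (n r : ℕ) (ii : ℕ → ℕ) : ℕ → ℕ → ℕ := fun k l =>
  if 1 ≤ l ∧ l ≤ r then (if k = ii l then 1 else 0)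
  else if 2 * n + 1 - r ≤ l ∧ l ≤ 2 * n then (if 2 * n + 1 - k = ii (2 * n + 1 - l) then 1 else 0)
  else 0

theorem tupleMat_of_le (n r : ℕ) (ii : ℕ → ℕ) (k : ℕ) {j : ℕ} (hj1 : 1 ≤ j) (hjr : j ≤ r) :
    tupleMat n r ii k j = if ii j = k then 1 else 0 := by
  simp only [tupleMat, hj1, hjr, and_self, if_true, eq_comm]

theorem sum_Icc_tupleMat_eq_card (n r : ℕ) (ii : ℕ → ℕ) (k : ℕ) {m : ℕ} (hmr : m ≤ r) :
    ∑ j ∈ Icc 1 m, tupleMat n r ii k j = #{j ∈ Icc 1 m | ii j = k} := by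
  rw [card_filter]
  refine sum_congr rfl fun j hj => ?_
  rw [mem_Icc] at hj
  exact tupleMat_of_le n r ii k hj.1 (hj.2.trans hmr)

theorem filter_Icc_one_eq_filter_Icc_pred {p : ℕ → Prop} [DecidablePred p] {l : ℕ} (hl : ¬ p l) :
    {j ∈ Icc 1 l | p j} = {j ∈ Icc 1 (l - 1) | p j} := by
  ext j
  simp only [mem_filter, mem_Icc]
  constructor
  · rintro ⟨⟨hj1, hjl⟩, hpj⟩
    have hne : j ≠ l := fun h => hl (h ▸ hpj)
    exact ⟨⟨hj1, by omega⟩, hpj⟩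
  · rintro ⟨⟨hj1, hjl⟩, hpj⟩
    exact ⟨⟨hj1, by omega⟩, hpj⟩

theorem tupleMat_betaPrime_at_n_general (n r : ℕ)
    (ii : ℕ → ℕ)
    (l : ℕ) (hl2 : l ≤ r) (hil : ii l = n) :
    ((∑ j ∈ Icc 1 l, (tupleMat n r ii (n + 1) j : ℤ))
        - ∑ j ∈ Icc 1 (l - 1), (tupleMat n r ii n j : ℤ))
      = (((Icc 1 (l - 1)).filter (fun k => ii k = n + 1)).card : ℤ)
        - (((Icc 1 (l - 1)).filter (fun k => ii k = n)).card : ℤ) := by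
  have hil' : ii l ≠ n + 1 := by omega
  rw [← Nat.cast_sum, ← Nat.cast_sum, sum_Icc_tupleMat_eq_card n r ii _ hl2,
    sum_Icc_tupleMat_eq_card n r ii _ ((Nat.sub_le l 1).trans hl2),
    filter_Icc_one_eq_filter_Icc_pred (p := fun k => ii k = n + 1) hil']

/-- For `n ≥ r ≥ 1`, `i ∈ I(2n,r)` and `l ∈ [1,r]` with `i_l = n`, one has
`β'_l(A_i, n) = #{k ∈ [1,l-1] : i_k = n+1} - #{k ∈ [1,l-1] : i_k = n}`,
where `β'_p(A, h) = ∑_{j ≤ p} a_{h+1,j} - ∑_{j < p} a_{h,j}`. -/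
theorem tupleMat_betaPrime_at_n (n r : ℕ) (hr : 1 ≤ r) (hrn : r ≤ n)
    (ii : ℕ → ℕ) (hii : ∀ k, 1 ≤ k → k ≤ r → 1 ≤ ii k ∧ ii k ≤ 2 * n)
    (l : ℕ) (hl1 : 1 ≤ l) (hl2 : l ≤ r) (hil : ii l = n) :
    ((∑ j ∈ Icc 1 l, (tupleMat n r ii (n + 1) j : ℤ))
        - ∑ j ∈ Icc 1 (l - 1), (tupleMat n r ii n j : ℤ))
      = (((Icc 1 (l - 1)).filter (fun k => ii k = n + 1)).card : ℤ)
        - (((Icc 1 (l - 1)).filter (fun k => ii k = n)).card : ℤ) :=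
  tupleMat_betaPrime_at_n_general n r ii l hl2 hil
end

section
/- Let N ≥ 1, let a = (a_1,…,a_N) ∈ ℕ^N, and let m ∈ ℕ with m ≤ a_1 + ⋯ + a_N. Consider the set D = {ν ∈ Λ(N,m) : ν_i ≤ a_i for all i}. Define ν^max recursively from the left by ν^max_i = min(a_i, m − (ν^max_1 + ⋯ + ν^max_{i−1})), and ν^min recursively from the right by ν^min_i = min(a_i, m − (ν^min_{i+1} + ⋯ + ν^min_N)). Then ν^max and ν^min belong to D, ν ⊴ ν^max for every ν ∈ D, and ν^min ⊴ ν for every ν ∈ D; i.e., D has a greatest element ν^max and a least element ν^min with respect to the dominance order. -/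
open Finset

/-!
Filling the boxes `a_i` greedily from the left keeps every prefix sum of `ν^max` equal to
`min(m, a_1 + ⋯ + a_t)`, which bounds the prefix sums of every `ν ∈ D` from above.
Filling from the right makes every suffix sum of `ν^min` equal to `min(m, a_t + ⋯ + a_N)`,
and since the suffix sums of any `ν ∈ D` are at most `a_t + ⋯ + a_N`, its prefix sums are
at least `m - (a_t + ⋯ + a_N)`, the prefix sums of `ν^min`.
-/

section GreedyComposition

variable {a v ν : ℕ → ℕ} {m n N t : ℕ}

theorem sum_range_eq_min_of_greedy
    (hv : ∀ i < n, v i = min (a i) (m - ∑ k ∈ range i, v k)) :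
    ∑ i ∈ range n, v i = min m (∑ i ∈ range n, a i) := by
  induction n with
  | zero => simp
  | succ n ih =>
    rw [sum_range_succ, sum_range_succ, hv n n.lt_succ_self,
      ih fun i hi => hv i (by omega)]
    omega

theorem sum_Ico_eq_min_of_greedy
    (hv : ∀ i ∈ Ico t N, v i = min (a i) (m - ∑ k ∈ Ico (i + 1) N, v k)) :
    ∑ i ∈ Ico t N, v i = min m (∑ i ∈ Ico t N, a i) := by
  induction h : N - t generalizing t with
  | zero => simp [Ico_eq_empty_of_le (show N ≤ t by omega)]
  | succ d ih =>
    have ht : t < N := by omega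
    rw [sum_eq_sum_Ico_succ_bot ht, sum_eq_sum_Ico_succ_bot ht, hv t (mem_Ico.2 ⟨le_rfl, ht⟩),
      ih (fun i hi => hv i (Ico_subset_Ico_left (Nat.le_add_right t 1) hi)) (by omega)]
    omega

theorem sum_range_le_min_of_le (hν : ∑ i ∈ range N, ν i = m) (hle : ∀ i < N, ν i ≤ a i)
    (ht : t ≤ N) :
    ∑ i ∈ range t, ν i ≤ min m (∑ i ∈ range t, a i) :=
  le_min (hν ▸ sum_le_sum_of_subset (range_subset_range.2 ht))
    (sum_le_sum fun i hi => hle i ((mem_range.1 hi).trans_le ht))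

theorem sub_sum_Ico_le_sum_range (hν : ∑ i ∈ range N, ν i = m) (hle : ∀ i < N, ν i ≤ a i)
    (ht : t ≤ N) :
    m - ∑ i ∈ Ico t N, a i ≤ ∑ i ∈ range t, ν i := by
  have hsplit := sum_range_add_sum_Ico ν ht
  have hsuffix : ∑ i ∈ Ico t N, ν i ≤ ∑ i ∈ Ico t N, a i :=
    sum_le_sum fun i hi => hle i (mem_Ico.1 hi).2
  omega

end GreedyComposition

theorem dominance_greatest_and_least_general (N : ℕ) (a : ℕ → ℕ) (m : ℕ)
    (hm : m ≤ ∑ i ∈ range N, a i)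
    (vmax vmin : ℕ → ℕ)
    (hmax : ∀ i, i < N → vmax i = min (a i) (m - ∑ k ∈ range i, vmax k))
    (hmin : ∀ i, i < N → vmin i = min (a i) (m - ∑ k ∈ Ico (i + 1) N, vmin k)) :
    -- νmax ∈ D
    (((∑ i ∈ range N, vmax i) = m ∧ ∀ i, i < N → vmax i ≤ a i)
    -- νmin ∈ D
    ∧ ((∑ i ∈ range N, vmin i) = m ∧ ∀ i, i < N → vmin i ≤ a i)
    -- νmax is the greatest element of D in the dominance order
    ∧ (∀ ν : ℕ → ℕ, (∑ i ∈ range N, ν i) = m → (∀ i, i < N → ν i ≤ a i) →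
        ∀ t, t ≤ N → (∑ i ∈ range t, ν i) ≤ ∑ i ∈ range t, vmax i)
    -- νmin is the least element of D in the dominance order
    ∧ (∀ ν : ℕ → ℕ, (∑ i ∈ range N, ν i) = m → (∀ i, i < N → ν i ≤ a i) →
        ∀ t, t ≤ N → (∑ i ∈ range t, vmin i) ≤ ∑ i ∈ range t, ν i)) := by
  have hmax_prefix (t : ℕ) (ht : t ≤ N) :
      ∑ i ∈ range t, vmax i = min m (∑ i ∈ range t, a i) :=
    sum_range_eq_min_of_greedy fun i hi => hmax i (by omega)
  have hmin_suffix (t : ℕ) : ∑ i ∈ Ico t N, vmin i = min m (∑ i ∈ Ico t N, a i) :=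
    sum_Ico_eq_min_of_greedy fun i hi => hmin i (mem_Ico.1 hi).2
  have hmin_total : ∑ i ∈ range N, vmin i = m := by
    rw [range_eq_Ico, hmin_suffix, ← range_eq_Ico]
    exact min_eq_left hm
  refine ⟨⟨?_, fun i hi => (hmax i hi).trans_le (min_le_left _ _)⟩,
    ⟨hmin_total, fun i hi => (hmin i hi).trans_le (min_le_left _ _)⟩, ?_, ?_⟩
  · rw [hmax_prefix N le_rfl]
    exact min_eq_left hm
  · intro ν hν hle t ht
    exact hmax_prefix t ht ▸ sum_range_le_min_of_le hν hle ht
  · intro ν hν hle t ht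
    have hsplit := sum_range_add_sum_Ico vmin ht
    have hν_prefix := sub_sum_Ico_le_sum_range hν hle ht
    have hvmin_suffix := hmin_suffix t
    omega

/-- Let `a ∈ ℕ^N` (indexed `0`-based by `0, …, N-1`) and `m ≤ a_0 + ⋯ + a_{N-1}`.
Suppose `νmax` satisfies the left-to-right recurrence
`νmax_i = min(a_i, m - (νmax_0 + ⋯ + νmax_{i-1}))` and `νmin` satisfies the
right-to-left recurrence `νmin_i = min(a_i, m - (νmin_{i+1} + ⋯ + νmin_{N-1}))`.
Then `νmax` and `νmin` belong to `D = {ν ∈ Λ(N,m) : ν_i ≤ a_i for all i}`,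
`νmax` is the greatest element of `D` and `νmin` is the least element of `D`
with respect to the dominance order. -/
theorem dominance_greatest_and_least (N : ℕ) (hN : 1 ≤ N) (a : ℕ → ℕ) (m : ℕ)
    (hm : m ≤ ∑ i ∈ range N, a i)
    (vmax vmin : ℕ → ℕ)
    (hmax : ∀ i, i < N → vmax i = min (a i) (m - ∑ k ∈ range i, vmax k))
    (hmin : ∀ i, i < N → vmin i = min (a i) (m - ∑ k ∈ Ico (i + 1) N, vmin k)) :
    -- νmax ∈ D
    (((∑ i ∈ range N, vmax i) = m ∧ ∀ i, i < N → vmax i ≤ a i)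
    -- νmin ∈ D
    ∧ ((∑ i ∈ range N, vmin i) = m ∧ ∀ i, i < N → vmin i ≤ a i)
    -- νmax is the greatest element of D in the dominance order
    ∧ (∀ ν : ℕ → ℕ, (∑ i ∈ range N, ν i) = m → (∀ i, i < N → ν i ≤ a i) →
        ∀ t, t ≤ N → (∑ i ∈ range t, ν i) ≤ ∑ i ∈ range t, vmax i)
    -- νmin is the least element of D in the dominance order
    ∧ (∀ ν : ℕ → ℕ, (∑ i ∈ range N, ν i) = m → (∀ i, i < N → ν i ≤ a i) →
        ∀ t, t ≤ N → (∑ i ∈ range t, vmin i) ≤ ∑ i ∈ range t, ν i)) :=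
  dominance_greatest_and_least_general N a m hm vmax vmin hmax hmin
end

section
/- Let n ≥ 1, let A = (a_{i,j}) ∈ Ξ_{2n+1}, let k ∈ [1,n], and let c, m be integers with 0 ≤ c < m ≤ a_{n,k}. For E'^θ_{i,j} := E_{i,j} + E_{2n+2−i,2n+2−j} (matrix units of size 2n+1), set B_c = A − c·E'^θ_{n,k} + c·E'^θ_{n+2,k} and B_m = A − m·E'^θ_{n,k} + m·E'^θ_{n+2,k}. Then B_c and B_m lie in Ξ_{2n+1}, B_c ⪯ B_m, and B_m ⪯ B_c fails; that is, B_c ≺ B_m strictly in the preorder. -/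
/-! `B_c - A` is `c` times a fixed `±1` pattern, so every block sum of `B_c` is that of `A` plus
`c` times the block sum of the pattern. That block sum is `1` for `u ∈ {n, n+1}` and
`k < v ≤ 2n+2-k` and `0` otherwise: never negative, which gives `B_c ⪯ B_m`, and positive at
`(u, v) = (n, n+1)`, which rules out `B_m ⪯ B_c`. -/

open Finset

/-- Entry of the matrix `E'^θ_{i,j} = E_{i,j} + E_{2n+2-i,2n+2-j}` (size `2n+1`,
`1`-based indexing), as an integer. -/
def EpZ (n i j : ℕ) : ℕ → ℕ → ℤ := fun x y =>
  (if x = i ∧ y = j then 1 else 0) + (if x = 2 * n + 2 - i ∧ y = 2 * n + 2 - j then 1 else 0)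

/-- Entry of the matrix `B_c = A - c·E'^θ_{n,k} + c·E'^θ_{n+2,k}`. -/
def moveMat (n k : ℕ) (A : ℕ → ℕ → ℕ) (c : ℕ) : ℕ → ℕ → ℤ := fun x y =>
  (A x y : ℤ) - (c : ℤ) * EpZ n n k x y + (c : ℤ) * EpZ n (n + 2) k x y

lemma sum_sum_ite_eq_and {α β : Type*} [DecidableEq α] [DecidableEq β]
    (s : Finset α) (t : Finset β) (p : α) (q : β) :
    ∑ i ∈ s, ∑ j ∈ t, (if i = p ∧ j = q then (1 : ℤ) else 0) = if p ∈ s ∧ q ∈ t then 1 else 0 := by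
  simp [ite_and, Finset.sum_ite_eq']

def blockSum (M : ℕ → ℕ → ℤ) (N u v : ℕ) : ℤ :=
  ∑ i ∈ Icc 1 u, ∑ j ∈ Icc v N, M i j

lemma blockSum_EpZ (n i j N u v : ℕ) :
    blockSum (EpZ n i j) N u v =
      (if i ∈ Icc 1 u ∧ j ∈ Icc v N then 1 else 0) +
      (if 2 * n + 2 - i ∈ Icc 1 u ∧ 2 * n + 2 - j ∈ Icc v N then 1 else 0) := by
  simp only [blockSum, EpZ, Finset.sum_add_distrib, sum_sum_ite_eq_and]

lemma blockSum_moveMat (n k : ℕ) (A : ℕ → ℕ → ℕ) (c N u v : ℕ) :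
    blockSum (moveMat n k A c) N u v =
      blockSum (fun i j => A i j) N u v +
        c * (blockSum (EpZ n (n + 2) k) N u v - blockSum (EpZ n n k) N u v) := by
  simp only [blockSum, moveMat, mul_sub, Finset.mul_sum, ← Finset.sum_add_distrib,
    ← Finset.sum_sub_distrib]
  refine Finset.sum_congr rfl fun i _ => Finset.sum_congr rfl fun j _ => ?_
  ring

lemma blockSum_EpZ_sub {n k : ℕ} (hk1 : 1 ≤ k) (hk2 : k ≤ n) (u v : ℕ) :
    blockSum (EpZ n (n + 2) k) (2 * n + 1) u v - blockSum (EpZ n n k) (2 * n + 1) u v =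
      if n ≤ u ∧ u ≤ n + 1 ∧ k < v ∧ v ≤ 2 * n + 2 - k then 1 else 0 := by
  simp only [blockSum_EpZ, mem_Icc]
  split_ifs <;> omega

lemma EpZ_reflect {n i j x y : ℕ} (hi : i ≤ 2 * n + 2) (hj : j ≤ 2 * n + 2)
    (hx : x ≤ 2 * n + 2) (hy : y ≤ 2 * n + 2) :
    EpZ n i j (2 * n + 2 - x) (2 * n + 2 - y) = EpZ n i j x y := by
  simp only [EpZ]
  split_ifs <;> omega

lemma moveMat_reflect {n k : ℕ} {A : ℕ → ℕ → ℕ} (hk : k ≤ 2 * n + 2) (c : ℕ) {x y : ℕ}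
    (hx : x ≤ 2 * n + 2) (hy : y ≤ 2 * n + 2)
    (hA : A x y = A (2 * n + 2 - x) (2 * n + 2 - y)) :
    moveMat n k A c x y = moveMat n k A c (2 * n + 2 - x) (2 * n + 2 - y) := by
  simp only [moveMat, EpZ_reflect (by omega : n ≤ 2 * n + 2) hk hx hy,
    EpZ_reflect (by omega : n + 2 ≤ 2 * n + 2) hk hx hy, hA]

/-- The two entries lowered by `c` both equal `a_{n,k}` by the symmetry of `A`. -/
lemma moveMat_nonneg {n k : ℕ} {A : ℕ → ℕ → ℕ} {c : ℕ}
    (hsym : A (n + 2) (2 * n + 2 - k) = A n k) (hc : c ≤ A n k) (x y : ℕ) :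
    0 ≤ moveMat n k A c x y := by
  simp only [moveMat, EpZ, show 2 * n + 2 - n = n + 2 by omega]
  split_ifs <;> grind

theorem moveMat_strict_prec_general (n : ℕ) (A : ℕ → ℕ → ℕ)
    (hA : ∀ i j, 1 ≤ i → i ≤ 2 * n + 1 → 1 ≤ j → j ≤ 2 * n + 1 →
      A i j = A (2 * n + 2 - i) (2 * n + 2 - j))
    (k : ℕ) (hk1 : 1 ≤ k) (hk2 : k ≤ n)
    (c m : ℕ) (hcm : c < m) (hma : m ≤ A n k) :
    -- B_c lies in Ξ_{2n+1}
    ((∀ x y, 1 ≤ x → x ≤ 2 * n + 1 → 1 ≤ y → y ≤ 2 * n + 1 →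
        0 ≤ moveMat n k A c x y ∧
        moveMat n k A c x y = moveMat n k A c (2 * n + 2 - x) (2 * n + 2 - y))
    -- B_m lies in Ξ_{2n+1}
    ∧ (∀ x y, 1 ≤ x → x ≤ 2 * n + 1 → 1 ≤ y → y ≤ 2 * n + 1 →
        0 ≤ moveMat n k A m x y ∧
        moveMat n k A m x y = moveMat n k A m (2 * n + 2 - x) (2 * n + 2 - y))
    -- B_c ⪯ B_m
    ∧ (∀ u v, 1 ≤ u → u < v → v ≤ 2 * n + 1 →
        (∑ i ∈ Icc 1 u, ∑ j ∈ Icc v (2 * n + 1), moveMat n k A c i j)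
          ≤ ∑ i ∈ Icc 1 u, ∑ j ∈ Icc v (2 * n + 1), moveMat n k A m i j)
    -- but not B_m ⪯ B_c
    ∧ ¬ (∀ u v, 1 ≤ u → u < v → v ≤ 2 * n + 1 →
        (∑ i ∈ Icc 1 u, ∑ j ∈ Icc v (2 * n + 1), moveMat n k A m i j)
          ≤ ∑ i ∈ Icc 1 u, ∑ j ∈ Icc v (2 * n + 1), moveMat n k A c i j)) := by
  have hsym : A (n + 2) (2 * n + 2 - k) = A n k := by
    simpa [show 2 * n + 2 - n = n + 2 by omega] using
      (hA n k (by omega) (by omega) hk1 (by omega)).symm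
  have mem_Xi : ∀ t ≤ A n k, ∀ x y, 1 ≤ x → x ≤ 2 * n + 1 → 1 ≤ y → y ≤ 2 * n + 1 →
      0 ≤ moveMat n k A t x y ∧
        moveMat n k A t x y = moveMat n k A t (2 * n + 2 - x) (2 * n + 2 - y) :=
    fun t ht x y hx1 hx2 hy1 hy2 => ⟨moveMat_nonneg hsym ht x y,
      moveMat_reflect (by omega) t (by omega) (by omega) (hA x y hx1 hx2 hy1 hy2)⟩
  have blockSum_eq (t u v : ℕ) : blockSum (moveMat n k A t) (2 * n + 1) u v =
      blockSum (fun i j => A i j) (2 * n + 1) u v +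
        t * if n ≤ u ∧ u ≤ n + 1 ∧ k < v ∧ v ≤ 2 * n + 2 - k then 1 else 0 := by
    rw [blockSum_moveMat, blockSum_EpZ_sub hk1 hk2]
  refine ⟨mem_Xi c (by omega), mem_Xi m hma, fun u v _ _ _ => ?_, fun h => ?_⟩
  · change blockSum _ _ u v ≤ blockSum _ _ u v
    rw [blockSum_eq, blockSum_eq]
    gcongr
  · have key : blockSum _ _ n (n + 1) ≤ blockSum _ _ n (n + 1) :=
      h n (n + 1) (by omega) (by omega) (by omega)
    rw [blockSum_eq, blockSum_eq, if_pos (by omega)] at key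
    omega

/-- Let `A ∈ Ξ_{2n+1}`, `k ∈ [1,n]` and `0 ≤ c < m ≤ a_{n,k}`.  Then
`B_c = A - c·E'^θ_{n,k} + c·E'^θ_{n+2,k}` and `B_m = A - m·E'^θ_{n,k} + m·E'^θ_{n+2,k}`
lie in `Ξ_{2n+1}`, `B_c ⪯ B_m`, and `B_m ⪯ B_c` fails; i.e. `B_c ≺ B_m` strictly. -/
theorem moveMat_strict_prec (n : ℕ) (hn : 1 ≤ n) (A : ℕ → ℕ → ℕ)
    (hA : ∀ i j, 1 ≤ i → i ≤ 2 * n + 1 → 1 ≤ j → j ≤ 2 * n + 1 →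
      A i j = A (2 * n + 2 - i) (2 * n + 2 - j))
    (k : ℕ) (hk1 : 1 ≤ k) (hk2 : k ≤ n)
    (c m : ℕ) (hcm : c < m) (hma : m ≤ A n k) :
    -- B_c lies in Ξ_{2n+1}
    ((∀ x y, 1 ≤ x → x ≤ 2 * n + 1 → 1 ≤ y → y ≤ 2 * n + 1 →
        0 ≤ moveMat n k A c x y ∧
        moveMat n k A c x y = moveMat n k A c (2 * n + 2 - x) (2 * n + 2 - y))
    -- B_m lies in Ξ_{2n+1}
    ∧ (∀ x y, 1 ≤ x → x ≤ 2 * n + 1 → 1 ≤ y → y ≤ 2 * n + 1 →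
        0 ≤ moveMat n k A m x y ∧
        moveMat n k A m x y = moveMat n k A m (2 * n + 2 - x) (2 * n + 2 - y))
    -- B_c ⪯ B_m
    ∧ (∀ u v, 1 ≤ u → u < v → v ≤ 2 * n + 1 →
        (∑ i ∈ Icc 1 u, ∑ j ∈ Icc v (2 * n + 1), moveMat n k A c i j)
          ≤ ∑ i ∈ Icc 1 u, ∑ j ∈ Icc v (2 * n + 1), moveMat n k A m i j)
    -- but not B_m ⪯ B_c
    ∧ ¬ (∀ u v, 1 ≤ u → u < v → v ≤ 2 * n + 1 →
        (∑ i ∈ Icc 1 u, ∑ j ∈ Icc v (2 * n + 1), moveMat n k A m i j)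
          ≤ ∑ i ∈ Icc 1 u, ∑ j ∈ Icc v (2 * n + 1), moveMat n k A c i j)) :=
  moveMat_strict_prec_general n A hA k hk1 hk2 c m hcm hma
end
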